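/- arXiv:2112.03800 — 3 statements merged into one kernel-verified Lean document; each statement's English description precedes it below -/
import Mathlib

section
/- Let (Y, μ) be a probability space, let S : Y → Y be a measurable measure-preserving map, and let Q₀ ⊆ Y be a measurable set with μ(Q₀) = 1/2. Then for every M ≥ 1, every y₀ ∈ Y, and every real ε with 0 ≤ ε ≤ 1/2, the set { y ∈ Y : d̄_M(y, y₀) ≤ ε } has μ-measure at most 1/2 + 2ε. -/
/-!
Let `A i` be the set of points whose `i`-th `Q₀`-letter agrees with that of `y₀`. Since `S` preserves
`μ` and `μ Q₀ = 1/2`, each `A i` has measure `1/2`, so the number of agreements among the first `M`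
letters has mean `M/2`. A point of the `ε`-ball agrees in at least `(1 - ε) M` letters, and Markov's
inequality bounds the measure of the ball by `1 / (2 (1 - ε)) ≤ 1/2 + 2ε` for `0 ≤ ε ≤ 1/2`.
-/

open MeasureTheory Finset

open scoped ENNReal

theorem one_sub_mul_card_le_card_filter_of_card_filter_not_div_le {ι : Type*} (s : Finset ι)
    (p : ι → Prop) [DecidablePred p] {ε : ℝ} (hs : s.Nonempty)
    (h : (#{i ∈ s | ¬p i} : ℝ) / #s ≤ ε) :
    (1 - ε) * #s ≤ #{i ∈ s | p i} := by
  have hsplit : (#{i ∈ s | p i} : ℝ) + #{i ∈ s | ¬p i} = #s := by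
    exact_mod_cast card_filter_add_card_filter_not p
  rw [div_le_iff₀ (by exact_mod_cast hs.card_pos)] at h
  linarith

section

variable {α : Type*} [MeasurableSpace α]

theorem measurableSet_setOf_mem_iff {Q : Set α} (hQ : MeasurableSet Q) (p : Prop) :
    MeasurableSet {y | y ∈ Q ↔ p} := by
  by_cases hp : p
  · simp only [hp, iff_true]
    exact hQ
  · simp only [hp, iff_false]
    exact hQ.compl

theorem measure_setOf_mem_iff_of_measure_eq_half (μ : Measure α) [IsProbabilityMeasure μ]
    {Q : Set α} (hQ : MeasurableSet Q) (hμQ : μ Q = 1 / 2) (p : Prop) :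
    μ {y | y ∈ Q ↔ p} = 1 / 2 := by
  by_cases hp : p
  · simpa [hp] using hμQ
  · simp only [hp, iff_false]
    rw [← Set.compl_def, prob_compl_eq_one_sub hQ, hμQ, one_div, ENNReal.one_sub_inv_two]

open Classical in
theorem mul_meas_ge_card_filter_mem_le_sum (μ : Measure α) {ι : Type*} (s : Finset ι)
    {A : ι → Set α} (hA : ∀ i ∈ s, MeasurableSet (A i)) (c : ℝ≥0∞) :
    c * μ {x | c ≤ #{i ∈ s | x ∈ A i}} ≤ ∑ i ∈ s, μ (A i) := by
  have hcount : ∀ x, (#{i ∈ s | x ∈ A i} : ℝ≥0∞) = ∑ i ∈ s, (A i).indicator 1 x := by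
    intro x
    simp only [Set.indicator_apply, Pi.one_apply, sum_boole]
  have hmeas : ∀ i ∈ s, AEMeasurable ((A i).indicator (1 : α → ℝ≥0∞)) μ :=
    fun i hi => (measurable_one.indicator (hA i hi)).aemeasurable
  calc c * μ {x | c ≤ #{i ∈ s | x ∈ A i}}
      ≤ ∫⁻ x, ∑ i ∈ s, (A i).indicator 1 x ∂μ := by
        simp_rw [hcount]
        exact mul_meas_ge_le_lintegral₀ (s.aemeasurable_fun_sum hmeas) c
    _ = ∑ i ∈ s, μ (A i) := by
        rw [lintegral_finsetSum' s hmeas]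
        refine sum_congr rfl fun i hi => ?_
        simp [lintegral_indicator (hA i hi)]

open Classical in
theorem measure_card_filter_not_mem_div_le_le_of_measure_eq_half {ι : Type*} (μ : Measure α)
    {s : Finset ι} (hs : s.Nonempty) {A : ι → Set α}
    (hA : ∀ i ∈ s, MeasurableSet (A i)) (hμA : ∀ i ∈ s, μ (A i) = 1 / 2)
    {ε : ℝ} (hε0 : 0 ≤ ε) (hε : ε ≤ 1 / 2) :
    μ {x | (#{i ∈ s | x ∉ A i} : ℝ) / #s ≤ ε} ≤ ENNReal.ofReal (1 / 2 + 2 * ε) := by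
  have hs_pos : (0 : ℝ) < #s := by exact_mod_cast hs.card_pos
  set c := (1 - ε) * #s
  have hc_pos : 0 < c := mul_pos (by linarith) hs_pos
  have hagree : {x | (#{i ∈ s | x ∉ A i} : ℝ) / #s ≤ ε} ⊆
      {x | ENNReal.ofReal c ≤ #{i ∈ s | x ∈ A i}} := fun x hx => by
    rw [Set.mem_ofPred_eq, ← ENNReal.ofReal_natCast]
    exact ENNReal.ofReal_le_ofReal
      (one_sub_mul_card_le_card_filter_of_card_filter_not_div_le s (x ∈ A ·) hs hx)
  have hmarkov : ENNReal.ofReal c * μ {x | (#{i ∈ s | x ∉ A i} : ℝ) / #s ≤ ε} ≤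
      ENNReal.ofReal (#s / 2) :=
    calc _ ≤ ENNReal.ofReal c * μ {x | ENNReal.ofReal c ≤ #{i ∈ s | x ∈ A i}} := by gcongr
      _ ≤ ∑ i ∈ s, μ (A i) := mul_meas_ge_card_filter_mem_le_sum μ s hA _
      _ = ENNReal.ofReal (#s / 2) := by
        rw [sum_congr rfl hμA, ENNReal.ofReal_div_of_pos two_pos]
        simp [ENNReal.div_eq_inv_mul, mul_comm]
  calc _ ≤ ENNReal.ofReal (#s / 2 / c) := by
        rw [ENNReal.ofReal_div_of_pos hc_pos, ENNReal.le_div_iff_mul_le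
          (by simp [hc_pos]) (by simp), mul_comm]
        exact hmarkov
    _ ≤ ENNReal.ofReal (1 / 2 + 2 * ε) := by
        refine ENNReal.ofReal_le_ofReal ((div_le_iff₀ hc_pos).mpr ?_)
        nlinarith [mul_nonneg (mul_nonneg hε0 hs_pos.le) (by linarith : (0 : ℝ) ≤ 3 / 2 - 2 * ε)]

end

open MeasureTheory in
open Classical in
/-- Lemma: for a measure-preserving map `S` on a probability space and a set `Q₀`
of measure `1/2`, any ball of radius `ε ≤ 1/2` in the `Q`-name Hamming distance
`d̄_M` has measure at most `1/2 + 2ε`. -/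
theorem stmt_1 {Y : Type*} [MeasurableSpace Y] (μ : Measure Y) [IsProbabilityMeasure μ]
    (S : Y → Y) (hS : MeasurePreserving S μ μ)
    (Q₀ : Set Y) (hQ₀ : MeasurableSet Q₀) (hμQ₀ : μ Q₀ = 1 / 2)
    (M : ℕ) (hM : 1 ≤ M) (y₀ : Y) (ε : ℝ) (hε0 : 0 ≤ ε) (hε : ε ≤ 1 / 2) :
    μ {y | (((Finset.range M).filter fun i =>
        ¬((S^[i] y ∈ Q₀) ↔ (S^[i] y₀ ∈ Q₀))).card : ℝ) / M ≤ ε}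
      ≤ ENNReal.ofReal (1 / 2 + 2 * ε) := by
  set A : ℕ → Set Y := fun i => S^[i] ⁻¹' {z | z ∈ Q₀ ↔ S^[i] y₀ ∈ Q₀}
  have hA_meas (i : ℕ) : MeasurableSet (A i) :=
    (hS.iterate i).measurable (measurableSet_setOf_mem_iff hQ₀ _)
  have hA_measure (i : ℕ) : μ (A i) = 1 / 2 := by
    rw [(hS.iterate i).measure_preimage (measurableSet_setOf_mem_iff hQ₀ _).nullMeasurableSet,
      measure_setOf_mem_iff_of_measure_eq_half μ hQ₀ hμQ₀]
  simpa [A] using measure_card_filter_not_mem_div_le_le_of_measure_eq_half μ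
    (nonempty_range_iff.mpr (by omega)) (fun i _ => hA_meas i) (fun i _ => hA_measure i) hε0 hε
end

section
/- Let σ denote the shift (σx)_i = x_{i+1} on {0,1}^ℤ, let X ⊆ {0,1}^ℤ be a nonempty closed shift-invariant subset, and for n ≥ 1 let a_n be the number of words w ∈ {0,1}^n that occur as (x_j, …, x_{j+n−1}) for some x ∈ X and j ∈ ℤ. Let μ₀ be an ergodic shift-invariant Borel probability measure on {0,1}^ℤ with μ₀(X) = 1, and let Q₀ ⊆ {0,1}^ℤ be a Borel set. Then for all ε and δ with 0 < ε < 1/100 and 0 < δ < 1/100 there exists N such that for every n ≥ N there exist a natural number m ≤ a_{2n} and points x_1, …, x_m ∈ X with μ₀( ⋃_{i=1}^m B_n(x_i, ε) ) > 1 − δ, where B_n(x₀, ε) = { x : d̄_n(x, x₀) < ε } and d̄_n(x, x₀) = (1/n)·#{ 0 ≤ i < n : (σ^i x ∈ Q₀) ≠ (σ^i x₀ ∈ Q₀) }. -/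
/-!
Approximate `Q₀` within `μ₀`-measure `εδ/4` by a cylinder set `Q` depending only on the
coordinates in `[-K, K]`. Since `σ` preserves `μ₀`, the expected number of visits of the orbit
segment `y, σ y, …, σ^{n-1} y` to `Q₀ ∆ Q` is `n μ₀(Q₀ ∆ Q)`, so by Markov's inequality all but
`δ/2` of `X` (in measure) visits it fewer than `εn/2` times. For `n ≥ 2K`, two such points with the
same block on `[-K, 2n - K)` have the same `Q`-name of length `n`, hence `Q₀`-names at distance
`< ε`. Choosing one good point of `X` per realized block of length `2n` gives at most `a_{2n}`
centers.
-/

open MeasureTheory Finset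

lemma exists_mem_measurableCylinders_measure_symmDiff_lt {ι : Type*} {α : ι → Type*}
    [∀ i, MeasurableSpace (α i)] (μ : Measure (∀ i, α i)) [IsFiniteMeasure μ]
    {A : Set (∀ i, α i)} (hA : MeasurableSet A) {η : ℝ} (hη : 0 < η) :
    ∃ Q ∈ measurableCylinders α, μ (symmDiff A Q) < ENNReal.ofReal η :=
  (Measure.MeasureDense.of_generateFrom_isSetAlgebra_finite μ isSetAlgebra_measurableCylinders
    generateFrom_measurableCylinders.symm).approx A hA (measure_ne_top μ A) η hη

lemma exists_natAbs_le_of_mem_measurableCylinders {α : Type*} [MeasurableSpace α]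
    {Q : Set (ℤ → α)} (hQ : Q ∈ measurableCylinders fun _ : ℤ => α) :
    ∃ K : ℕ, ∀ x y : ℤ → α, (∀ j : ℤ, j.natAbs ≤ K → x j = y j) → (x ∈ Q ↔ y ∈ Q) := by
  obtain ⟨s, S, -, rfl⟩ := (mem_measurableCylinders Q).1 hQ
  refine ⟨s.sup Int.natAbs, fun x y hxy => ?_⟩
  have hrestrict : s.restrict x = s.restrict y := funext fun j => hxy j (le_sup j.2)
  simp only [mem_cylinder, hrestrict]

section Shift

variable {α : Type*} {σ : (ℤ → α) → ℤ → α}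

lemma iterate_apply_of_apply_eq_add_one (hσ : ∀ x i, σ x i = x (i + 1))
    (k : ℕ) (x : ℤ → α) (j : ℤ) : σ^[k] x j = x (j + k) := by
  induction k generalizing j with
  | zero => simp
  | succ k ih =>
    rw [Function.iterate_succ_apply', hσ, ih]
    congr 1
    push_cast
    ring

lemma iterate_mem_iff_of_block_eq (hσ : ∀ x i, σ x i = x (i + 1)) {Q : Set (ℤ → α)} {K : ℕ}
    (hQ : ∀ x y : ℤ → α, (∀ j : ℤ, j.natAbs ≤ K → x j = y j) → (x ∈ Q ↔ y ∈ Q))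
    {n : ℕ} (hn : 2 * K ≤ n) {y z : ℤ → α}
    (hyz : ∀ i : Fin (2 * n), y (-K + i) = z (-K + i)) :
    ∀ k < n, (σ^[k] y ∈ Q ↔ σ^[k] z ∈ Q) := by
  intro k hk
  refine hQ _ _ fun j hj => ?_
  rw [iterate_apply_of_apply_eq_add_one hσ, iterate_apply_of_apply_eq_add_one hσ]
  have h := hyz ⟨(j + k + K).toNat, by omega⟩
  have hidx : -(K : ℤ) + (((j + k + K).toNat : ℕ) : ℤ) = j + k := by omega
  simpa only [hidx] using h

end Shift

section VisitCount

open scoped Classical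

variable {β : Type*}

noncomputable def visitCount (T : β → β) (D : Set β) (n : ℕ) (y : β) : ℕ :=
  #{k ∈ range n | T^[k] y ∈ D}

lemma visitCount_eq_sum_indicator (T : β → β) (D : Set β) (n : ℕ) (y : β) :
    (visitCount T D n y : ENNReal) = ∑ k ∈ range n, (T^[k] ⁻¹' D).indicator 1 y := by
  rw [visitCount, card_filter]
  push_cast
  refine sum_congr rfl fun k _ => ?_
  by_cases h : T^[k] y ∈ D <;> simp [h]

/-- Where the `A`-names of `y` and `z` differ but their `B`-names agree, one of the two orbits
is in `A ∆ B`. -/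
lemma card_filter_not_iff_le_visitCount_add (T : β → β) (A B : Set β) {n : ℕ} {y z : β}
    (hB : ∀ k < n, (T^[k] y ∈ B ↔ T^[k] z ∈ B)) :
    #{k ∈ range n | ¬(T^[k] y ∈ A ↔ T^[k] z ∈ A)}
      ≤ visitCount T (symmDiff A B) n y + visitCount T (symmDiff A B) n z := by
  refine (card_le_card fun k hk => ?_).trans (card_union_le _ _)
  rw [mem_filter, mem_range] at hk
  have := hB k hk.1
  simp only [mem_union, mem_filter, mem_range, Set.mem_symmDiff]
  tauto

lemma card_filter_not_iff_div_lt (T : β → β) (A B : Set β) {n : ℕ} (hn : 0 < n) {ε : ℝ}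
    {y z : β} (hB : ∀ k < n, (T^[k] y ∈ B ↔ T^[k] z ∈ B))
    (hy : (visitCount T (symmDiff A B) n y : ℝ) < ε / 2 * n)
    (hz : (visitCount T (symmDiff A B) n z : ℝ) < ε / 2 * n) :
    (#{k ∈ range n | ¬(T^[k] y ∈ A ↔ T^[k] z ∈ A)} : ℝ) / n < ε := by
  rw [div_lt_iff₀ (by exact_mod_cast hn)]
  calc _ ≤ (visitCount T (symmDiff A B) n y : ℝ) + visitCount T (symmDiff A B) n z := by
        exact_mod_cast card_filter_not_iff_le_visitCount_add T A B hB
    _ < ε * n := by linarith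

variable [MeasurableSpace β] {μ : Measure β} {T : β → β} {D : Set β}

lemma MeasureTheory.MeasurePreserving.lintegral_visitCount (hT : MeasurePreserving T μ μ)
    (hD : MeasurableSet D) (n : ℕ) :
    ∫⁻ y, (visitCount T D n y : ENNReal) ∂μ = n * μ D := by
  have hpre : ∀ k, MeasurableSet (T^[k] ⁻¹' D) := fun k => hD.preimage (hT.measurable.iterate k)
  simp_rw [visitCount_eq_sum_indicator]
  rw [lintegral_finsetSum _ fun k _ => measurable_one.indicator (hpre k)]
  calc ∑ k ∈ range n, ∫⁻ y, (T^[k] ⁻¹' D).indicator 1 y ∂μ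
      = ∑ k ∈ range n, μ D := sum_congr rfl fun k _ => by
        rw [lintegral_indicator_one (hpre k),
          (hT.iterate k).measure_preimage hD.nullMeasurableSet]
    _ = n * μ D := by rw [sum_const, card_range, nsmul_eq_mul]

lemma MeasureTheory.MeasurePreserving.measure_le_visitCount_le (hT : MeasurePreserving T μ μ)
    (hD : MeasurableSet D) {c : ℝ} (hc : 0 < c) {n : ℕ} (hn : 0 < n) :
    μ {y | c * n ≤ (visitCount T D n y : ℝ)} ≤ μ D / ENNReal.ofReal c := by
  have hmeas : Measurable fun y => (visitCount T D n y : ENNReal) := by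
    simp_rw [visitCount_eq_sum_indicator]
    exact Finset.measurable_sum _ fun k _ =>
      measurable_one.indicator (hD.preimage (hT.measurable.iterate k))
  have hset : {y | c * n ≤ (visitCount T D n y : ℝ)}
      = {y | n * ENNReal.ofReal c ≤ (visitCount T D n y : ENNReal)} := by
    ext y
    rw [Set.mem_ofPred_eq, Set.mem_ofPred_eq, mul_comm c, ← ENNReal.ofReal_natCast n,
      ← ENNReal.ofReal_mul (Nat.cast_nonneg n), ← ENNReal.ofReal_natCast,
      ENNReal.ofReal_le_ofReal_iff (Nat.cast_nonneg _)]
  have hn' : (n : ENNReal) ≠ 0 := by exact_mod_cast hn.ne'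
  have hc' : ENNReal.ofReal c ≠ 0 := by simpa using hc
  have hmarkov :
      n * ENNReal.ofReal c * μ {y | n * ENNReal.ofReal c ≤ (visitCount T D n y : ENNReal)}
        ≤ n * μ D :=
    (mul_meas_ge_le_lintegral₀ hmeas.aemeasurable _).trans_eq (hT.lintegral_visitCount hD n)
  rw [mul_assoc, ENNReal.mul_le_mul_iff_right hn' (ENNReal.natCast_ne_top n)] at hmarkov
  rw [hset, ENNReal.le_div_iff_mul_le (Or.inl hc') (Or.inl ENNReal.ofReal_ne_top), mul_comm]
  exact hmarkov

end VisitCount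

lemma exists_centers_of_block_mem {β W : Type*} (G : Set β) (blk : β → W) (S : Finset W)
    (hS : ∀ y ∈ G, blk y ∈ S) :
    ∃ m ≤ #S, ∃ x : Fin m → β, (∀ i, x i ∈ G) ∧ ∀ y ∈ G, ∃ i, blk (x i) = blk y := by
  classical
  set S' := {w ∈ S | ∃ y ∈ G, blk y = w}
  have hcenter : ∀ i : Fin #S', ∃ y ∈ G, blk y = S'.equivFin.symm i := fun i =>
    (mem_filter.1 (S'.equivFin.symm i).2).2
  choose x hxG hx using hcenter
  refine ⟨#S', card_filter_le _ _, x, hxG, fun y hy => ⟨S'.equivFin ⟨blk y, ?_⟩, ?_⟩⟩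
  · exact mem_filter.2 ⟨hS y hy, y, hy, rfl⟩
  · rw [hx, Equiv.symm_apply_apply]

lemma ofReal_one_sub_lt_measure_sdiff {β : Type*} [MeasurableSpace β] {μ : Measure β}
    {X B : Set β} (hX : μ X = 1) {η δ : ℝ} (hη : 0 ≤ η) (hηδ : η < δ) (hη1 : η < 1)
    (hB : μ B ≤ ENNReal.ofReal η) :
    ENNReal.ofReal (1 - δ) < μ (X \ B) := by
  calc ENNReal.ofReal (1 - δ) < ENNReal.ofReal (1 - η) :=
        (ENNReal.ofReal_lt_ofReal_iff (by linarith)).2 (by linarith)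
    _ = 1 - ENNReal.ofReal η := by rw [ENNReal.ofReal_sub _ hη, ENNReal.ofReal_one]
    _ ≤ μ X - μ B := by rw [hX]; exact tsub_le_tsub_left hB 1
    _ ≤ μ (X \ B) := le_measure_sdiff

open MeasureTheory in
open Classical in
theorem stmt_9_general
    (σ : (ℤ → Bool) → (ℤ → Bool)) (hσ : ∀ x i, σ x i = x (i + 1))
    (X : Set (ℤ → Bool))
    (a : ℕ → ℕ)
    (ha : ∀ n, a n = (Finset.univ.filter fun w : Fin n → Bool =>
        ∃ x ∈ X, ∃ j : ℤ, ∀ i : Fin n, x (j + (i : ℤ)) = w i).card)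
    (μ₀ : Measure (ℤ → Bool)) [IsProbabilityMeasure μ₀]
    (hσerg : Ergodic σ μ₀) (hμX : μ₀ X = 1)
    (Q₀ : Set (ℤ → Bool)) (hQ₀ : MeasurableSet Q₀)
    (ε δ : ℝ) (hε0 : 0 < ε) (hδ0 : 0 < δ) (hδ : δ < 1 / 100) :
    ∃ N : ℕ, ∀ n ≥ N, ∃ m : ℕ, m ≤ a (2 * n) ∧ ∃ x : Fin m → (ℤ → Bool),
      (∀ i, x i ∈ X) ∧
      ENNReal.ofReal (1 - δ) <
        μ₀ (⋃ i : Fin m, {y | (((Finset.range n).filter fun k =>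
          ¬((σ^[k] y ∈ Q₀) ↔ (σ^[k] (x i) ∈ Q₀))).card : ℝ) / n < ε}) := by
  classical
  have hσμ := hσerg.toMeasurePreserving
  obtain ⟨Q, hQcyl, hQ₀Q⟩ := exists_mem_measurableCylinders_measure_symmDiff_lt μ₀ hQ₀
    (η := δ / 2 * (ε / 2)) (by positivity)
  obtain ⟨K, hK⟩ := exists_natAbs_le_of_mem_measurableCylinders hQcyl
  have hD : MeasurableSet (symmDiff Q₀ Q) := hQ₀.symmDiff (.of_mem_measurableCylinders hQcyl)
  refine ⟨2 * K + 1, fun n hn => ?_⟩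
  have hn0 : 0 < n := by omega
  set bad := {y | ε / 2 * n ≤ (visitCount σ (symmDiff Q₀ Q) n y : ℝ)}
  have hbad : μ₀ bad ≤ ENNReal.ofReal (δ / 2) :=
    (hσμ.measure_le_visitCount_le hD (by positivity) hn0).trans <|
      ENNReal.div_le_of_le_mul <| by
        rw [← ENNReal.ofReal_mul (by positivity)]; exact hQ₀Q.le
  obtain ⟨m, hm, x, hxgood, hx⟩ := exists_centers_of_block_mem (X \ bad)
    (fun y (i : Fin (2 * n)) => y (-K + i))
    {w | ∃ x ∈ X, ∃ j : ℤ, ∀ i : Fin (2 * n), x (j + (i : ℤ)) = w i} fun y hy => by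
      rw [mem_filter]; exact ⟨mem_univ _, y, hy.1, -K, fun i => rfl⟩
  refine ⟨m, hm.trans_eq (ha _).symm, x, fun i => (hxgood i).1,
    (ofReal_one_sub_lt_measure_sdiff hμX (by positivity) (by linarith) (by linarith) hbad).trans_le
      (measure_mono fun y hy => Set.mem_iUnion.2 ?_)⟩
  obtain ⟨i, hi⟩ := hx y hy
  have hnames := iterate_mem_iff_of_block_eq hσ hK (by omega) fun j => (congrFun hi j).symm
  have hxi := (hxgood i).2
  simp only [bad, Set.mem_sdiff, Set.mem_ofPred_eq, not_le] at hy hxi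
  exact ⟨i, card_filter_not_iff_div_lt σ Q₀ Q hn0 hnames hy.2 hxi⟩

open MeasureTheory in
open Classical in
/-- Lemma "1-delta" from the paper: let `X` be a nonempty closed shift-invariant subset of
`{0,1}^ℤ`, let `a_n` count the `n`-blocks occurring in `X`, let `μ₀` be an ergodic
shift-invariant probability measure with `μ₀(X) = 1`, and let `Q₀` be a Borel set.
Then for `0 < ε < 1/100` and `0 < δ < 1/100` there is `N` such that for all `n ≥ N`,
at most `a_{2n}` Hamming balls `B_n(x_i, ε)` (with centers in `X`) suffice to cover a set
of measure `> 1 − δ`. -/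
theorem stmt_9
    (σ : (ℤ → Bool) → (ℤ → Bool)) (hσ : ∀ x i, σ x i = x (i + 1))
    (X : Set (ℤ → Bool)) (hXne : X.Nonempty) (hXcl : IsClosed X)
    (hXinv : σ ⁻¹' X = X)
    (a : ℕ → ℕ)
    (ha : ∀ n, a n = (Finset.univ.filter fun w : Fin n → Bool =>
        ∃ x ∈ X, ∃ j : ℤ, ∀ i : Fin n, x (j + (i : ℤ)) = w i).card)
    (μ₀ : Measure (ℤ → Bool)) [IsProbabilityMeasure μ₀]
    (hσerg : Ergodic σ μ₀) (hμX : μ₀ X = 1)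
    (Q₀ : Set (ℤ → Bool)) (hQ₀ : MeasurableSet Q₀)
    (ε δ : ℝ) (hε0 : 0 < ε) (hε : ε < 1 / 100) (hδ0 : 0 < δ) (hδ : δ < 1 / 100) :
    ∃ N : ℕ, ∀ n ≥ N, ∃ m : ℕ, m ≤ a (2 * n) ∧ ∃ x : Fin m → (ℤ → Bool),
      (∀ i, x i ∈ X) ∧
      ENNReal.ofReal (1 - δ) <
        μ₀ (⋃ i : Fin m, {y | (((Finset.range n).filter fun k =>
          ¬((σ^[k] y ∈ Q₀) ↔ (σ^[k] (x i) ∈ Q₀))).card : ℝ) / n < ε}) :=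
  stmt_9_general σ hσ X a ha μ₀ hσerg hμX Q₀ hQ₀ ε δ hε0 hδ0 hδ
end

section
/- Let (X, μ) and (Y, ν) be probability spaces, let T : X → X and Ŝ : Y → Y be measurable measure-preserving maps, let π : Y → X be a measurable measure-preserving map with π(Ŝ y) = T(π y) for ν-almost every y, and let θ : X → Y be a measurable measure-preserving map with θ(T x) = Ŝ(θ x) for μ-almost every x, admitting a measurable map θ⁻ : Y → X with θ⁻(θ x) = x for μ-almost every x and θ(θ⁻ y) = y for ν-almost every y. Define E = π ∘ θ : X → X. Then: (i) E is measure-preserving; (ii) E(T x) = T(E x) for μ-almost every x; and (iii) if there is no measurable map G : X → Y with G(π y) = y for ν-almost every y, then there is no measurable map F : X → X with F(E x) = x for μ-almost every x. -/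
/-! If `F` undid `π ∘ θ` almost everywhere, then `θ ∘ F` would undo `π`: pulling the identity
`F (π (θ x)) = x` back along the inverse `θ⁻¹`, which is measure-preserving, turns it into
`θ (F (π y)) = y` for `ν`-a.e. `y`. -/

namespace MeasureTheory

variable {X Y : Type*} [MeasurableSpace X] [MeasurableSpace Y] {μ : Measure X} {ν : Measure Y}

theorem MeasurePreserving.of_ae_leftInverse {θ : X → Y} {θinv : Y → X}
    (hθ : MeasurePreserving θ μ ν) (hθinv : Measurable θinv)
    (hleft : ∀ᵐ x ∂μ, θinv (θ x) = x) : MeasurePreserving θinv ν μ := by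
  refine ⟨hθinv, ?_⟩
  rw [← hθ.map_eq, Measure.map_map hθinv hθ.measurable]
  exact (Measure.map_congr hleft).trans Measure.map_id

theorem ae_semiconj_comp {T : X → X} {S : Y → Y} {π : Y → X} {θ : X → Y}
    (hθ : Measure.QuasiMeasurePreserving θ μ ν) (hπ : ∀ᵐ y ∂ν, π (S y) = T (π y))
    (hθS : ∀ᵐ x ∂μ, θ (T x) = S (θ x)) :
    ∀ᵐ x ∂μ, π (θ (T x)) = T (π (θ x)) := by
  filter_upwards [hθ.ae hπ, hθS] with x hπx hθx
  rw [hθx, hπx]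

theorem ae_section_of_ae_leftInverse_comp {π : Y → X} {θ : X → Y} {θinv : Y → X} {F : X → X}
    (hθinv : Measure.QuasiMeasurePreserving θinv ν μ) (hright : ∀ᵐ y ∂ν, θ (θinv y) = y)
    (hF : ∀ᵐ x ∂μ, F (π (θ x)) = x) :
    ∀ᵐ y ∂ν, θ (F (π y)) = y := by
  filter_upwards [hθinv.ae hF, hright] with y hFy hy
  rw [hy] at hFy
  rw [hFy, hy]

end MeasureTheory

open MeasureTheory in
theorem stmt_11_general {X Y : Type*} [MeasurableSpace X] [MeasurableSpace Y]
    (μ : Measure X) (ν : Measure Y)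
    (T : X → X) (Shat : Y → Y)
    (π : Y → X) (hπ : MeasurePreserving π ν μ) (hπeq : ∀ᵐ y ∂ν, π (Shat y) = T (π y))
    (θ : X → Y) (hθ : MeasurePreserving θ μ ν) (hθeq : ∀ᵐ x ∂μ, θ (T x) = Shat (θ x))
    (θinv : Y → X) (hθinv : Measurable θinv)
    (hθinv₁ : ∀ᵐ x ∂μ, θinv (θ x) = x) (hθinv₂ : ∀ᵐ y ∂ν, θ (θinv y) = y) :
    MeasurePreserving (π ∘ θ) μ μ ∧
    (∀ᵐ x ∂μ, (π ∘ θ) (T x) = T ((π ∘ θ) x)) ∧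
    ((¬ ∃ G : X → Y, Measurable G ∧ ∀ᵐ y ∂ν, G (π y) = y) →
      ¬ ∃ F : X → X, Measurable F ∧ ∀ᵐ x ∂μ, F ((π ∘ θ) x) = x) := by
  have hθinvMP : MeasurePreserving θinv ν μ := hθ.of_ae_leftInverse hθinv hθinv₁
  refine ⟨hπ.comp hθ, ae_semiconj_comp hθ.quasiMeasurePreserving hπeq hθeq, ?_⟩
  rintro hnoSection ⟨F, hF, hFE⟩
  exact hnoSection ⟨θ ∘ F, hθ.measurable.comp hF,
    ae_section_of_ae_leftInverse_comp hθinvMP.quasiMeasurePreserving hθinv₂ hFE⟩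

open MeasureTheory in
/-- Core of "a dominant system is not coalescent": if `π : (Y,ν,Ŝ) → (X,μ,T)` is a factor
map and `θ : (X,μ,T) → (Y,ν,Ŝ)` an isomorphism, then `E = π ∘ θ` is an endomorphism of
`(X,μ,T)`; and if `π` admits no measurable a.e. section inverse (i.e. the extension is
proper) then `E` admits no measurable a.e. left inverse, so `E` is not an automorphism. -/
theorem stmt_11 {X Y : Type*} [MeasurableSpace X] [MeasurableSpace Y]
    (μ : Measure X) (ν : Measure Y) [IsProbabilityMeasure μ] [IsProbabilityMeasure ν]
    (T : X → X) (Shat : Y → Y)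
    (hT : MeasurePreserving T μ μ) (hShat : MeasurePreserving Shat ν ν)
    (π : Y → X) (hπ : MeasurePreserving π ν μ) (hπeq : ∀ᵐ y ∂ν, π (Shat y) = T (π y))
    (θ : X → Y) (hθ : MeasurePreserving θ μ ν) (hθeq : ∀ᵐ x ∂μ, θ (T x) = Shat (θ x))
    (θinv : Y → X) (hθinv : Measurable θinv)
    (hθinv₁ : ∀ᵐ x ∂μ, θinv (θ x) = x) (hθinv₂ : ∀ᵐ y ∂ν, θ (θinv y) = y) :
    MeasurePreserving (π ∘ θ) μ μ ∧
    (∀ᵐ x ∂μ, (π ∘ θ) (T x) = T ((π ∘ θ) x)) ∧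
    ((¬ ∃ G : X → Y, Measurable G ∧ ∀ᵐ y ∂ν, G (π y) = y) →
      ¬ ∃ F : X → X, Measurable F ∧ ∀ᵐ x ∂μ, F ((π ∘ θ) x) = x) :=
  stmt_11_general μ ν T Shat π hπ hπeq θ hθ hθeq θinv hθinv hθinv₁ hθinv₂
end
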